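/- For every integer n ≥ 1, Σ^{2^{n−1}}_n = −2^{(n−1)(n−2)/2} (equivalently, a(n, 2^{n−1}) = 2^{(n−1)(n−2)/2}, where a(n,l) := −Σ^l_n). -/

import Mathlib

/-- The ±1 Thue–Morse sequence: `u n = (-1)^(s₂(n)+1)` where `s₂` is the binary digit sum. -/
def u (n : ℕ) : ℤ := (-1) ^ ((Nat.digits 2 n).sum + 1)

/-- The "Pascal triangle" associated to the Thue–Morse sequence:
`Sig k n` is `Σ^k_n` (k the superscript, n the subscript). -/
def Sig : ℕ → ℕ → ℤ
  | k, 0 => u k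
  | 0, _ + 1 => 0
  | k + 1, n + 1 => Sig k n + Sig k (n + 1)

/-!
Unrolling Pascal's rule gives `Σ^k_{m+1} = ∑_{j<k} u_j C(k-1-j, m)`, which for `k = 2^m` is the
coefficient of `X^m` in `P_m(X+1)`, where `P_m = ∑_{j<2^m} u_j X^{2^m-1-j}`. The Thue–Morse
recursion gives `P_{m+1}(X) = (X - 1) P_m(X²)`, hence `P_m = -∏_{t<m} (X^{2^t} - 1)`. Every factor
vanishes at `1` with derivative `2^t` there, so that coefficient is `-∏_{t<m} 2^t = -2^{m(m-1)/2}`.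
-/

open Polynomial Finset

lemma u_two_mul (k : ℕ) : u (2 * k) = u k := by
  rcases Nat.eq_zero_or_pos k with rfl | hk
  · rfl
  · rw [u, u, Nat.digits_def' (by norm_num) (by omega)]
    simp

lemma u_two_mul_add_one (k : ℕ) : u (2 * k + 1) = -u k := by
  rw [u, u, Nat.digits_def' (by norm_num) (by omega), show (2 * k + 1) / 2 = k by omega]
  simp only [Nat.mul_add_mod_self_left, List.sum_cons]
  ring

lemma sig_succ_eq_sum_choose (k m : ℕ) :
    Sig k (m + 1) = ∑ j ∈ range k, u j * ((k - 1 - j).choose m : ℤ) := by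
  induction k generalizing m with
  | zero => rfl
  | succ k ih =>
    cases m with
    | zero =>
      have hSig : Sig k 0 = u k := by cases k <;> rfl
      simp only [Sig, hSig, ih, sum_range_succ, Nat.choose_zero_right, Nat.cast_one, mul_one]
      ring
    | succ m =>
      simp only [Sig, ih, sum_range_succ, Nat.add_sub_cancel, Nat.sub_self, Nat.choose_zero_succ,
        Nat.cast_zero, mul_zero, add_zero, ← sum_add_distrib, ← mul_add]
      refine sum_congr rfl fun j hj => ?_
      rw [show k - j = k - 1 - j + 1 by have := mem_range.mp hj; omega, Nat.choose_succ_succ',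
        Nat.cast_add]

lemma sum_range_two_mul {M : Type*} [AddCommMonoid M] (f : ℕ → M) (N : ℕ) :
    ∑ j ∈ range (2 * N), f j = ∑ i ∈ range N, (f (2 * i) + f (2 * i + 1)) := by
  induction N with
  | zero => simp
  | succ N ih =>
    rw [Nat.mul_succ, sum_range_succ, sum_range_succ, ih, sum_range_succ, add_assoc]

noncomputable def thueMorsePoly (m : ℕ) : ℤ[X] :=
  ∑ j ∈ range (2 ^ m), C (u j) * X ^ (2 ^ m - 1 - j)

lemma thueMorsePoly_succ (m : ℕ) :
    thueMorsePoly (m + 1) = (X - 1) * expand ℤ 2 (thueMorsePoly m) := by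
  simp only [thueMorsePoly, map_sum, map_mul, map_pow, expand_C, expand_X, mul_sum]
  rw [pow_succ', sum_range_two_mul]
  refine sum_congr rfl fun i hi => ?_
  have hi := mem_range.mp hi
  rw [u_two_mul, u_two_mul_add_one, map_neg, ← pow_mul,
    show 2 * 2 ^ m - 1 - 2 * i = 2 * (2 ^ m - 1 - i) + 1 by omega,
    show 2 * 2 ^ m - 1 - (2 * i + 1) = 2 * (2 ^ m - 1 - i) by omega]
  ring

lemma thueMorsePoly_eq_neg_prod (m : ℕ) :
    thueMorsePoly m = -∏ t ∈ range m, (X ^ 2 ^ t - 1) := by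
  induction m with
  | zero => simp [thueMorsePoly, u]
  | succ m ih =>
    simp only [thueMorsePoly_succ, ih, map_neg, map_prod, map_sub, map_pow, expand_X, map_one,
      prod_range_succ', ← pow_mul, ← pow_succ', pow_zero, pow_one]
    ring

lemma coeff_taylor_one_C_mul_X_pow {R : Type*} [CommSemiring R] (c : R) (a m : ℕ) :
    (taylor 1 (C c * X ^ a)).coeff m = c * a.choose m := by
  rw [taylor_mul, taylor_C, taylor_X_pow, map_one, coeff_C_mul, coeff_X_add_one_pow]

lemma coeff_card_prod_of_coeff_zero_eq_zero {R ι : Type*} [CommSemiring R] (s : Finset ι)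
    (p : ι → R[X]) (h : ∀ i ∈ s, (p i).coeff 0 = 0) :
    (∏ i ∈ s, p i).coeff #s = ∏ i ∈ s, (p i).coeff 1 := by
  have hX : ∀ i ∈ s, p i = X * divX (p i) := fun i hi => by
    simpa [h i hi] using (X_mul_divX_add (p i)).symm
  rw [prod_congr rfl hX, prod_mul_distrib, prod_const, coeff_X_pow_mul', if_pos le_rfl,
    Nat.sub_self, coeff_zero_prod]
  simp only [coeff_divX, zero_add]

lemma coeff_taylor_prod_of_eval_eq_zero {R ι : Type*} [CommRing R] (r : R) (s : Finset ι)
    (p : ι → R[X]) (h : ∀ i ∈ s, (p i).eval r = 0) :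
    (taylor r (∏ i ∈ s, p i)).coeff #s = ∏ i ∈ s, (p i).derivative.eval r := by
  rw [show taylor r (∏ i ∈ s, p i) = ∏ i ∈ s, taylor r (p i) from map_prod (taylorAlgHom r) p s,
    coeff_card_prod_of_coeff_zero_eq_zero]
  · simp only [taylor_coeff_one]
  · simpa only [taylor_coeff_zero] using h

lemma sig_two_pow_eq_coeff_taylor (m : ℕ) :
    Sig (2 ^ m) (m + 1) = (taylor 1 (thueMorsePoly m)).coeff m := by
  simp only [sig_succ_eq_sum_choose, thueMorsePoly, map_sum, finsetSum_coeff,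
    coeff_taylor_one_C_mul_X_pow]

theorem sig_midpoint_value (n : ℕ) (hn : 1 ≤ n) :
    Sig (2 ^ (n - 1)) n = -(2 ^ ((n - 1) * (n - 2) / 2)) := by
  obtain ⟨m, rfl⟩ : ∃ m, n = m + 1 := ⟨n - 1, by omega⟩
  have hcoeff := coeff_taylor_prod_of_eval_eq_zero (1 : ℤ) (range m) (fun t => X ^ 2 ^ t - 1)
    (by simp)
  rw [card_range] at hcoeff
  rw [Nat.add_sub_cancel, show m + 1 - 2 = m - 1 by omega, sig_two_pow_eq_coeff_taylor,
    thueMorsePoly_eq_neg_prod, map_neg, coeff_neg, hcoeff, ← sum_range_id, ← prod_pow_eq_pow_sum]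
  simp [derivative_X_pow]
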